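/- Suppose n is even and 2 ≤ n ≤ 2g−2, and let J ⊆ E be the ideal generated by the Macdonald relations of weight n+1 with q = 0. Then for any pairwise distinct indices k_1,…,k_{n/2} ∈ {1,…,g} one has the congruence y·(y − x_{k_1}x'_{k_1})⋯(y − x_{k_{n/2}}x'_{k_{n/2}}) ≡ y·(y − x_1x'_1)(y − x_2x'_2)⋯(y − x_{n/2}x'_{n/2}) modulo J. -/

import Mathlib

noncomputable section

open Polynomial

/-- The free graded-commutative ring `E = Λ_ℤ⟨x₁,…,x_g,x'₁,…,x'_g⟩ ⊗ ℤ[y]`,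
realized as the exterior algebra over `ℤ[y]` on a free module of rank `2g`. -/
abbrev E (g : ℕ) : Type :=
  ExteriorAlgebra (Polynomial ℤ) ((Fin g ⊕ Fin g) → Polynomial ℤ)

/-- The degree-one generator `x_i`. -/
def x (g : ℕ) (i : Fin g) : E g :=
  ExteriorAlgebra.ι (Polynomial ℤ) (Pi.single (Sum.inl i) 1)

/-- The degree-one generator `x'_i`. -/
def x' (g : ℕ) (i : Fin g) : E g :=
  ExteriorAlgebra.ι (Polynomial ℤ) (Pi.single (Sum.inr i) 1)

/-- The degree-two polynomial generator `y`. -/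
def y (g : ℕ) : E g :=
  algebraMap (Polynomial ℤ) (E g) Polynomial.X

/-- The Macdonald relation `x_{i₁}⋯x_{i_a}·x'_{j₁}⋯x'_{j_b}·(y−x_{k₁}x'_{k₁})⋯(y−x_{k_c}x'_{k_c})·y^q`
associated to lists of indices `I, J, K` and `q : ℕ`. -/
def macRel (g : ℕ) (I J K : List (Fin g)) (q : ℕ) : E g :=
  (I.map (x g)).prod * (J.map (x' g)).prod *
    (K.map (fun k => y g - x g k * x' g k)).prod * (y g) ^ q

/-- The two-sided ideal `I_Mac` generated by all Macdonald relations of weight `n+1`. -/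
def IMac (g n : ℕ) : TwoSidedIdeal (E g) :=
  TwoSidedIdeal.span {z : E g | ∃ (I J K : List (Fin g)) (q : ℕ),
    (I ++ J ++ K).Nodup ∧ I.length + J.length + 2 * K.length + q = n + 1 ∧
    z = macRel g I J K q}

/-- The monomial `x_A x'_B y^q`. -/
def emonomial (g : ℕ) (A B : Finset (Fin g)) (q : ℕ) : E g :=
  ((A.sort (· ≤ ·)).map (x g)).prod * ((B.sort (· ≤ ·)).map (x' g)).prod * (y g) ^ q

/-- The degree-`s` homogeneous component `E^s`, the ℤ-span of the monomials of degree `s`. -/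
def Ecomp (g s : ℕ) : Submodule ℤ (E g) :=
  Submodule.span ℤ {z : E g | ∃ (A B : Finset (Fin g)) (q : ℕ),
    A.card + B.card + 2 * q = s ∧ z = emonomial g A B q}

/-! Write `f_k = y − x_k x'_k`; these commute, since products of two degree-one elements are
central. For `l ∉ s` with `2|s| = n`, the element `x_l ∏_{k ∈ s} f_k` is a Macdonald relation of
weight `n + 1` with `q = 0`, and `y − f_l = x_l x'_l = −x'_l x_l`, so `y ∏_s f ≡ f_l ∏_s f`.
Using this once with `s = R ∪ {m}` and once with `s = R ∪ {l}` gives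
`y f_m ∏_R f ≡ f_l f_m ∏_R f ≡ y f_l ∏_R f`: one index may be exchanged for any other, and any
two index sets of size `n/2` are connected by such exchanges. -/

theorem Finset.eq_of_card_eq_of_exchange {α β : Type*} [DecidableEq α] {F : Finset α → β}
    {c : ℕ} (hexch : ∀ s l m, s.card + 1 = c → l ∉ s → m ∉ s → l ≠ m →
      F (insert m s) = F (insert l s))
    {s t : Finset α} (hs : s.card = c) (ht : t.card = c) : F s = F t := by
  suffices ∀ d s, s.card = c → (s \ t).card = d → F s = F t from this _ s hs rfl
  intro d
  induction d with
  | zero =>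
    intro s hs hd
    have hsub : s ⊆ t := Finset.sdiff_eq_empty_iff_subset.1 (Finset.card_eq_zero.1 hd)
    rw [Finset.eq_of_subset_of_card_le hsub (by omega)]
  | succ d ih =>
    intro s hs hd
    obtain ⟨m, hm⟩ : (s \ t).Nonempty := Finset.card_pos.1 (by omega)
    obtain ⟨l, hl⟩ : (t \ s).Nonempty :=
      Finset.card_pos.1 (by rw [← Finset.card_sdiff_comm (hs.trans ht.symm)]; omega)
    rw [Finset.mem_sdiff] at hm hl
    have hl' : l ∉ s.erase m := fun h => hl.2 (Finset.mem_of_mem_erase h)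
    have hcard : (s.erase m).card + 1 = c := by rw [Finset.card_erase_add_one hm.1, hs]
    have hstep : F s = F (insert l (s.erase m)) := by
      simpa only [Finset.insert_erase hm.1] using
        hexch (s.erase m) l m hcard hl' (Finset.notMem_erase m s) (fun h => hm.2 (h ▸ hl.1))
    refine hstep.trans (ih _ ?_ ?_)
    · rw [Finset.card_insert_of_notMem hl', hcard]
    · rw [Finset.insert_sdiff_of_mem _ hl.1, Finset.erase_sdiff_comm,
        Finset.card_erase_of_mem (Finset.mem_sdiff.2 hm), hd, Nat.add_sub_cancel]

open ExteriorAlgebra in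
theorem ExteriorAlgebra.commute_ι_mul_ι_ι {R M : Type*} [CommRing R] [AddCommGroup M]
    [Module R M] (u v w : M) : Commute (ι R u * ι R v) (ι R w) := by
  have anticomm : ∀ p q : M, ι R p * ι R q = -(ι R q * ι R p) := fun p q =>
    eq_neg_of_add_eq_zero_left (ι_add_mul_swap p q)
  calc ι R u * ι R v * ι R w = -(ι R u * ι R w * ι R v) := by
        rw [mul_assoc, anticomm v w, mul_neg, mul_assoc]
    _ = ι R w * (ι R u * ι R v) := by rw [anticomm u w, neg_mul, neg_neg, mul_assoc]

section Macdonald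

variable (g : ℕ)

def macFactor (k : Fin g) : E g := y g - x g k * x' g k

theorem commute_y (z : E g) : Commute (y g) z := Algebra.commutes Polynomial.X z

theorem commute_macFactor (k l : Fin g) : Commute (macFactor g k) (macFactor g l) := by
  have hxx : Commute (x g k * x' g k) (x g l * x' g l) :=
    (ExteriorAlgebra.commute_ι_mul_ι_ι _ _ _).mul_right (ExteriorAlgebra.commute_ι_mul_ι_ι _ _ _)
  exact (commute_y g _).sub_left ((commute_y g _).symm.sub_right hxx)

def macProd (s : Finset (Fin g)) : E g :=
  s.noncommProd (macFactor g) fun k _ l _ _ => commute_macFactor g k l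

theorem macProd_insert {s : Finset (Fin g)} {k : Fin g} (hk : k ∉ s) :
    macProd g (insert k s) = macFactor g k * macProd g s :=
  Finset.noncommProd_insert_of_notMem _ _ _ _ hk

theorem list_prod_map_macFactor {L : List (Fin g)} (hL : L.Nodup) :
    (L.map fun k => y g - x g k * x' g k).prod = macProd g L.toFinset :=
  (Finset.noncommProd_toFinset L _ _ hL).symm

def qZeroIdeal (n : ℕ) : TwoSidedIdeal (E g) :=
  TwoSidedIdeal.span {z : E g | ∃ (I J K' : List (Fin g)),
    (I ++ J ++ K').Nodup ∧ I.length + J.length + 2 * K'.length = n + 1 ∧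
    z = macRel g I J K' 0}

variable {g}

theorem x_mul_macProd_mem_qZeroIdeal {n : ℕ} {s : Finset (Fin g)} (hs : 2 * s.card = n)
    {l : Fin g} (hl : l ∉ s) : x g l * macProd g s ∈ qZeroIdeal g n := by
  apply TwoSidedIdeal.subset_span
  refine ⟨[l], [], s.toList, by simpa [s.nodup_toList] using hl, ?_, ?_⟩
  · simp only [List.length_singleton, List.length_nil, Finset.length_toList]
    omega
  · simp only [macRel, List.map_cons, List.map_nil, List.prod_cons, List.prod_nil, mul_one,
      pow_zero, list_prod_map_macFactor g s.nodup_toList, Finset.toList_toFinset]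

theorem y_mul_macProd_sub_macFactor_mul_mem {n : ℕ} {s : Finset (Fin g)} (hs : 2 * s.card = n)
    {l : Fin g} (hl : l ∉ s) :
    y g * macProd g s - macFactor g l * macProd g s ∈ qZeroIdeal g n := by
  have hxx' : x g l * x' g l = -(x' g l * x g l) :=
    eq_neg_of_add_eq_zero_left (ExteriorAlgebra.ι_add_mul_swap _ _)
  have key : y g * macProd g s - macFactor g l * macProd g s
      = -(x' g l * (x g l * macProd g s)) := by
    rw [← sub_mul, macFactor, sub_sub_cancel, hxx', neg_mul, mul_assoc]
  rw [key]
  exact (qZeroIdeal g n).neg_mem <|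
    (qZeroIdeal g n).mul_mem_left _ _ (x_mul_macProd_mem_qZeroIdeal hs hl)

theorem y_mul_macProd_insert_sub_mem {n : ℕ} {s : Finset (Fin g)} (hs : 2 * (s.card + 1) = n)
    {l m : Fin g} (hl : l ∉ s) (hm : m ∉ s) (hlm : l ≠ m) :
    y g * macProd g (insert m s) - y g * macProd g (insert l s) ∈ qZeroIdeal g n := by
  have h₁ := y_mul_macProd_sub_macFactor_mul_mem (n := n) (l := l) (s := insert m s)
    (by rwa [Finset.card_insert_of_notMem hm]) (by simp [hl, hlm])
  have h₂ := y_mul_macProd_sub_macFactor_mul_mem (n := n) (l := m) (s := insert l s)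
    (by rwa [Finset.card_insert_of_notMem hl]) (by simp [hm, hlm.symm])
  rw [macProd_insert g hm] at h₁ ⊢
  rw [macProd_insert g hl] at h₂ ⊢
  have hswap : macFactor g l * (macFactor g m * macProd g s)
      = macFactor g m * (macFactor g l * macProd g s) := by
    rw [← mul_assoc, ← mul_assoc, (commute_macFactor g l m).eq]
  rw [hswap] at h₁
  simpa only [sub_sub_sub_cancel_right] using (qZeroIdeal g n).sub_mem h₁ h₂

theorem y_mul_macProd_sub_mem {n : ℕ} {s t : Finset (Fin g)} (hs : 2 * s.card = n)
    (ht : 2 * t.card = n) : y g * macProd g s - y g * macProd g t ∈ qZeroIdeal g n := by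
  rw [← TwoSidedIdeal.rel_iff, ← RingCon.eq _]
  refine Finset.eq_of_card_eq_of_exchange (F := fun s => ((y g * macProd g s : E g) :
    (qZeroIdeal g n).ringCon.Quotient)) (c := n / 2) ?_ (by omega) (by omega)
  intro u l m hu hl hm hlm
  exact (RingCon.eq _).2 <| (TwoSidedIdeal.rel_iff _ _ _).2 <|
    y_mul_macProd_insert_sub_mem (by omega) hl hm hlm

end Macdonald

theorem y_prod_congruent_mod_q_zero_ideal_general (g n : ℕ) (heven : Even n)
    (K : List (Fin g)) (hnd : K.Nodup)
    (hlen : K.length = n / 2) :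
    y g * (K.map (fun k => y g - x g k * x' g k)).prod -
      y g * (((List.finRange g).take (n / 2)).map (fun k => y g - x g k * x' g k)).prod ∈
      TwoSidedIdeal.span {z : E g | ∃ (I J K' : List (Fin g)),
        (I ++ J ++ K').Nodup ∧ I.length + J.length + 2 * K'.length = n + 1 ∧
        z = macRel g I J K' 0} := by
  have hhalf : 2 * (n / 2) = n := Nat.two_mul_div_two_of_even heven
  have hng : n / 2 ≤ g := by simpa [hlen] using hnd.length_le_card
  have hnd₀ : ((List.finRange g).take (n / 2)).Nodup :=
    (List.nodup_finRange g).sublist (List.take_sublist _ _)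
  rw [list_prod_map_macFactor g hnd, list_prod_map_macFactor g hnd₀]
  refine y_mul_macProd_sub_mem ?_ ?_
  · rw [List.toFinset_card_of_nodup hnd, hlen, hhalf]
  · rw [List.toFinset_card_of_nodup hnd₀, List.length_take, List.length_finRange,
      Nat.min_eq_left hng, hhalf]

/-- For even `2 ≤ n ≤ 2g − 2` and pairwise distinct `k₁,…,k_{n/2}`, one has
`y·(y − x_{k₁}x'_{k₁})⋯(y − x_{k_{n/2}}x'_{k_{n/2}}) ≡ y·(y − x₁x'₁)⋯(y − x_{n/2}x'_{n/2})`
modulo the ideal `J` generated by the Macdonald relations of weight `n+1` with `q = 0`. -/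
theorem y_prod_congruent_mod_q_zero_ideal (g n : ℕ) (hg : 1 ≤ g) (heven : Even n)
    (h2 : 2 ≤ n) (h2g : n ≤ 2 * g - 2) (K : List (Fin g)) (hnd : K.Nodup)
    (hlen : K.length = n / 2) :
    y g * (K.map (fun k => y g - x g k * x' g k)).prod -
      y g * (((List.finRange g).take (n / 2)).map (fun k => y g - x g k * x' g k)).prod ∈
      TwoSidedIdeal.span {z : E g | ∃ (I J K' : List (Fin g)),
        (I ++ J ++ K').Nodup ∧ I.length + J.length + 2 * K'.length = n + 1 ∧
        z = macRel g I J K' 0} :=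
  y_prod_congruent_mod_q_zero_ideal_general g n heven K hnd hlen
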